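/- arXiv:1301.2131 — 3 statements merged into one kernel-verified Lean document; each statement's English description precedes it below -/
import Mathlib

section
/- For λ ∈ ℂ* and b ∈ ℂ with b ≠ 1, the Virasoro module Ω(λ, b) is irreducible (simple): its only submodules are 0 and the whole module. -/
open Polynomial TensorProduct

/-- The Virasoro commutation relations for a family of operators `d i` (the action of the
basis vectors `d_i`) and a central operator `cc` (the action of the central element `c`) on a
complex vector space: `[d_i, d_j] = (j - i) d_{i+j} + δ_{i,-j} (i^3 - i)/12 c` and `c` central. -/
def VirRep {V : Type*} [AddCommGroup V] [Module ℂ V]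
    (d : ℤ → Module.End ℂ V) (cc : Module.End ℂ V) : Prop :=
  (∀ i : ℤ, cc * d i = d i * cc) ∧
    ∀ i j : ℤ, d i * d j - d j * d i =
      ((j : ℂ) - (i : ℂ)) • d (i + j) +
        (if i + j = 0 then ((i : ℂ) ^ 3 - (i : ℂ)) / 12 else 0) • cc

/-- A subspace invariant under the Virasoro action, i.e. a Virasoro submodule. -/
def VirInvariant {V : Type*} [AddCommGroup V] [Module ℂ V]
    (d : ℤ → Module.End ℂ V) (cc : Module.End ℂ V) (p : Submodule ℂ V) : Prop :=
  (∀ i : ℤ, ∀ v ∈ p, d i v ∈ p) ∧ ∀ v ∈ p, cc v ∈ p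

/-- The operator by which `d_n` acts on `Ω(λ, b) = ℂ[∂]`:
`f(∂) ↦ λ^n (∂ + n(b-1)) f(∂ - n)`. The central element acts by `0`. -/
noncomputable def omegaD (lam b : ℂ) (n : ℤ) : Module.End ℂ (Polynomial ℂ) where
  toFun f := lam ^ n • ((X + Polynomial.C ((n : ℂ) * (b - 1))) * f.comp (X - Polynomial.C (n : ℂ)))
  map_add' f g := by simp [add_comp, mul_add, smul_add]
  map_smul' a f := by
    simp only [RingHom.id_apply, smul_comp, mul_smul_comm]
    rw [smul_comm]

/-- The diagonal action of `d_i` on a tensor product of two Virasoro modules. -/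
noncomputable def tensorD {V W : Type*} [AddCommGroup V] [Module ℂ V] [AddCommGroup W]
    [Module ℂ W] (dV : ℤ → Module.End ℂ V) (dW : ℤ → Module.End ℂ W) (i : ℤ) :
    Module.End ℂ (V ⊗[ℂ] W) :=
  LinearMap.rTensor W (dV i) + LinearMap.lTensor V (dW i)

/-- The diagonal action of the central element on a tensor product of two Virasoro modules. -/
noncomputable def tensorC {V W : Type*} [AddCommGroup V] [Module ℂ V] [AddCommGroup W]
    [Module ℂ W] (cV : Module.End ℂ V) (cW : Module.End ℂ W) : Module.End ℂ (V ⊗[ℂ] W) :=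
  LinearMap.rTensor W cV + LinearMap.lTensor V cW

/-! The operator `d_0` is multiplication by `∂`, so a submodule of `Ω(λ, b)` is an ideal of
`ℂ[∂]`, generated by some `g`. Invariance under `d_n` gives `g ∣ (∂ + n(b-1)) g(∂ - n)`. If `g`
had a root, the root `r` of smallest real part could not be a root of `g(∂ - n)` for `n ≥ 1`,
so `r = -n(b-1)` for both `n = 1` and `n = 2`, forcing `b = 1`. Hence `g` is a unit. -/

namespace Polynomial

section Ideal

variable {R : Type*} [CommRing R]

lemma mul_mem_of_forall_X_mul_mem {p : Submodule R R[X]} (hX : ∀ f ∈ p, X * f ∈ p) (g : R[X])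
    {f : R[X]} (hf : f ∈ p) : g * f ∈ p := by
  induction g using Polynomial.induction_on with
  | C a => simpa [smul_eq_C_mul] using p.smul_mem a hf
  | add u v hu hv => simpa [add_mul] using p.add_mem hu hv
  | monomial n a ih => simpa [pow_succ, mul_assoc, mul_left_comm X] using hX _ ih

def idealOfForallXMulMem (p : Submodule R R[X]) (hX : ∀ f ∈ p, X * f ∈ p) : Ideal R[X] where
  toAddSubmonoid := p.toAddSubmonoid
  smul_mem' g _ hf := mul_mem_of_forall_X_mul_mem hX g hf

@[simp]
lemma mem_idealOfForallXMulMem {p : Submodule R R[X]} {hX : ∀ f ∈ p, X * f ∈ p} {f : R[X]} :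
    f ∈ idealOfForallXMulMem p hX ↔ f ∈ p :=
  Iff.rfl

end Ideal

lemma exists_isRoot_forall_re_le {f : ℂ[X]} (hf0 : f ≠ 0) (hf : f.degree ≠ 0) :
    ∃ r, f.IsRoot r ∧ ∀ r', f.IsRoot r' → r.re ≤ r'.re := by
  have hmem {r : ℂ} : r ∈ f.roots.toFinset ↔ f.IsRoot r := by
    rw [Multiset.mem_toFinset, mem_roots hf0]
  obtain ⟨r₀, hr₀⟩ := IsAlgClosed.exists_root f hf
  obtain ⟨r, hr, hmin⟩ := f.roots.toFinset.exists_min_image Complex.re ⟨r₀, hmem.2 hr₀⟩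
  exact ⟨r, hmem.1 hr, fun r' hr' => hmin r' (hmem.2 hr')⟩

lemma eq_neg_of_dvd_mul_comp_X_sub_C {f : ℂ[X]} {c s : ℂ} (hs : 0 < s.re)
    (hdvd : f ∣ (X + C c) * f.comp (X - C s)) {r : ℂ} (hr : f.IsRoot r)
    (hmin : ∀ r', f.IsRoot r' → r.re ≤ r'.re) : r = -c := by
  have hroot : (r + c) * f.eval (r - s) = 0 := by
    simpa [eval_comp] using (hr.dvd hdvd : IsRoot _ r)
  have hshift : ¬ f.IsRoot (r - s) := fun h => by
    have := hmin _ h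
    simp only [Complex.sub_re] at this
    linarith
  rw [eq_neg_iff_add_eq_zero]
  exact (mul_eq_zero.1 hroot).resolve_right hshift

lemma isUnit_of_forall_dvd_mul_comp_X_sub_C {f : ℂ[X]} (hf : f ≠ 0) {b : ℂ} (hb : b ≠ 1)
    (hdvd : ∀ n : ℕ, f ∣ (X + C (n * (b - 1))) * f.comp (X - C (n : ℂ))) : IsUnit f := by
  rw [isUnit_iff_degree_eq_zero]
  by_contra hdeg
  obtain ⟨r, hr, hmin⟩ := exists_isRoot_forall_re_le hf hdeg
  have h₁ : r = -(b - 1) :=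
    eq_neg_of_dvd_mul_comp_X_sub_C (s := 1) (by simp) (by simpa using hdvd 1) hr hmin
  have h₂ : r = -(2 * (b - 1)) :=
    eq_neg_of_dvd_mul_comp_X_sub_C (s := 2) (by simp) (by simpa using hdvd 2) hr hmin
  exact hb (by linear_combination h₂ - h₁)

end Polynomial

lemma omegaD_apply (lam b : ℂ) (n : ℤ) (f : ℂ[X]) :
    omegaD lam b n f = lam ^ n • ((X + C (n * (b - 1))) * f.comp (X - C (n : ℂ))) :=
  rfl

/-- For `λ ≠ 0` and `b ≠ 1` the module `Ω(λ, b)` is irreducible. -/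
theorem omega_irreducible (lam b : ℂ) (hlam : lam ≠ 0) (hb : b ≠ 1)
    (p : Submodule ℂ (Polynomial ℂ)) (hp : VirInvariant (omegaD lam b) 0 p) :
    p = ⊥ ∨ p = ⊤ := by
  have hX : ∀ f ∈ p, X * f ∈ p := fun f hf => by simpa [omegaD_apply] using hp.1 0 f hf
  set I := idealOfForallXMulMem p hX
  set g := Submodule.IsPrincipal.generator I
  have hg : g ∈ p := Submodule.IsPrincipal.generator_mem I
  have hdvd (n : ℕ) : g ∣ (X + C (n * (b - 1))) * g.comp (X - C (n : ℂ)) := by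
    rw [← Submodule.IsPrincipal.mem_iff_generator_dvd, mem_idealOfForallXMulMem,
      ← p.smul_mem_iff (zpow_ne_zero (n : ℤ) hlam)]
    simpa [omegaD_apply] using hp.1 n g hg
  rcases eq_or_ne g 0 with hg0 | hg0
  · left
    rw [← Submodule.IsPrincipal.eq_bot_iff_generator_eq_zero] at hg0
    exact (Submodule.eq_bot_iff p).2 ((Submodule.eq_bot_iff I).1 hg0)
  · right
    have hI : I = ⊤ := by
      rw [← Submodule.IsPrincipal.span_singleton_generator I]
      exact Ideal.span_singleton_eq_top.2 (isUnit_of_forall_dvd_mul_comp_X_sub_C hg0 hb hdvd)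
    exact Submodule.eq_top_iff'.2 fun f => show f ∈ I from hI ▸ Submodule.mem_top
end

section
/- Let λ ∈ ℂ*, λ₁, λ₂, θ ∈ ℂ, b ∈ ℂ, and let V be the classical Whittaker module U(Vir)/I where I is the left ideal generated by c - θ, d₁ - λ₁, d₂ - λ₂, and d_k for k ≥ 3; let v = 1 + I. Then in Ω(λ,b) ⊗ V, for k = 2, 3, 4: (d_k - λ^{k-1} d₁)(1 ⊗ v) = m_k (1 ⊗ v), where m₂ = λ₂ - λλ₁ + λ²(b-1), m₃ = λ²(-λ₁ + 2λ(b-1)), m₄ = λ³(-λ₁ + 3λ(b-1)). -/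
open Polynomial TensorProduct

section

variable {V : Type*} [AddCommGroup V] [Module ℂ V]

lemma omegaD_one (lam b : ℂ) (n : ℤ) :
    omegaD lam b n 1 = lam ^ n • (X + C ((n : ℂ) * (b - 1))) := by
  simp [omegaD]

lemma tensorD_omegaD_one_tmul (lam b : ℂ) (d : ℤ → Module.End ℂ V) (n : ℤ) (v : V) :
    tensorD (omegaD lam b) d n ((1 : ℂ[X]) ⊗ₜ[ℂ] v) =
      lam ^ n • ((X : ℂ[X]) ⊗ₜ[ℂ] v) + (lam ^ n * (n * (b - 1))) • ((1 : ℂ[X]) ⊗ₜ[ℂ] v) +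
        (1 : ℂ[X]) ⊗ₜ[ℂ] d n v := by
  rw [tensorD, LinearMap.add_apply, LinearMap.rTensor_tmul, LinearMap.lTensor_tmul, omegaD_one,
    ← mul_one (C _), C_mul', smul_add, smul_smul, add_tmul, ← smul_tmul', ← smul_tmul']

/-- The `∂ ⊗ v` components cancel, since `d_n` and `λ^{n-1} d_1` both scale `∂` by `λ^n`. -/
lemma tensorD_omegaD_sub_zpow_smul {lam : ℂ} (hlam : lam ≠ 0) (b : ℂ) (d : ℤ → Module.End ℂ V)
    (n : ℤ) (v : V) :
    tensorD (omegaD lam b) d n ((1 : ℂ[X]) ⊗ₜ[ℂ] v) -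
        lam ^ (n - 1) • tensorD (omegaD lam b) d 1 ((1 : ℂ[X]) ⊗ₜ[ℂ] v) =
      (lam ^ n * ((n - 1) * (b - 1))) • ((1 : ℂ[X]) ⊗ₜ[ℂ] v) +
        (1 : ℂ[X]) ⊗ₜ[ℂ] (d n v - lam ^ (n - 1) • d 1 v) := by
  have hpow : lam ^ (n - 1) * lam = lam ^ n := by rw [← zpow_add_one₀ hlam, sub_add_cancel]
  simp only [tensorD_omegaD_one_tmul, zpow_one, Int.cast_one, tmul_sub, tmul_smul, smul_add,
    smul_smul]
  rw [← hpow]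
  module

end

theorem whittaker_tensor_eigen_general {V : Type*} [AddCommGroup V] [Module ℂ V]
    (lam lam1 lam2 b : ℂ) (hlam : lam ≠ 0)
    (d : ℤ → Module.End ℂ V)
    (v : V)
    (h1 : d 1 v = lam1 • v) (h2 : d 2 v = lam2 • v)
    (h3 : ∀ k : ℤ, 3 ≤ k → d k v = 0) :
    ∀ k : ℤ, 2 ≤ k → k ≤ 4 →
      tensorD (omegaD lam b) d k ((1 : Polynomial ℂ) ⊗ₜ[ℂ] v) -
          lam ^ (k - 1) • tensorD (omegaD lam b) d 1 ((1 : Polynomial ℂ) ⊗ₜ[ℂ] v) =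
        (if k = 2 then lam2 - lam * lam1 + lam ^ 2 * (b - 1)
          else if k = 3 then lam ^ 2 * (-lam1 + 2 * lam * (b - 1))
          else lam ^ 3 * (-lam1 + 3 * lam * (b - 1))) • ((1 : Polynomial ℂ) ⊗ₜ[ℂ] v) := by
  intro k hk2 hk4
  rw [tensorD_omegaD_sub_zpow_smul hlam]
  interval_cases k <;> norm_num [h1, h2, h3, tmul_sub, tmul_neg, tmul_smul] <;> module

/-- for the classical Whittaker module `V` with cyclic Whittaker vector `v`
(`c v = θ v`, `d₁ v = λ₁ v`, `d₂ v = λ₂ v`, `d_k v = 0` for `k ≥ 3`), in `Ω(λ,b) ⊗ V` one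
has `(d_k - λ^{k-1} d₁)(1 ⊗ v) = m_k (1 ⊗ v)` for `k = 2, 3, 4`. -/
theorem whittaker_tensor_eigen {V : Type*} [AddCommGroup V] [Module ℂ V]
    (lam lam1 lam2 th b : ℂ) (hlam : lam ≠ 0)
    (d : ℤ → Module.End ℂ V) (cV : Module.End ℂ V) (hrep : VirRep d cV)
    (v : V) (hv : v ≠ 0) (hc : cV v = th • v)
    (h1 : d 1 v = lam1 • v) (h2 : d 2 v = lam2 • v)
    (h3 : ∀ k : ℤ, 3 ≤ k → d k v = 0)
    (hcyc : ∀ p : Submodule ℂ V, VirInvariant d cV p → v ∈ p → p = ⊤) :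
    ∀ k : ℤ, 2 ≤ k → k ≤ 4 →
      tensorD (omegaD lam b) d k ((1 : Polynomial ℂ) ⊗ₜ[ℂ] v) -
          lam ^ (k - 1) • tensorD (omegaD lam b) d 1 ((1 : Polynomial ℂ) ⊗ₜ[ℂ] v) =
        (if k = 2 then lam2 - lam * lam1 + lam ^ 2 * (b - 1)
          else if k = 3 then lam ^ 2 * (-lam1 + 2 * lam * (b - 1))
          else lam ^ 3 * (-lam1 + 3 * lam * (b - 1))) • ((1 : Polynomial ℂ) ⊗ₜ[ℂ] v) :=
  whittaker_tensor_eigen_general lam lam1 lam2 b hlam d v h1 h2 h3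
end

section
/- Let λ ∈ ℂ*, b ∈ ℂ \ {1}, and let V be a Virasoro module which is either a highest weight module or the Whittaker module L_{ψ_n,θ}. Then every submodule M of Ω(λ,b) ⊗ V has the form Ω(λ,b) ⊗ X for some submodule X of V. -/
open Polynomial TensorProduct

/-!
For large `l` the operator `d_l` kills any given `w ∈ M` in the `V`-factor, so `d_l w` is
`λ^l (∂ + l(b-1)) w(∂ - l)`, a polynomial in `l` with values in `Ω(λ,b) ⊗ V`. Since `M` contains
its values at infinitely many `l`, it contains all its coefficients. The constant coefficient is
`∂ w`, so `M` is a `ℂ[∂]`-submodule; if `w = ∑_{k ≤ N} ∂^k ⊗ u_k`, the top coefficient is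
`(b-1)(-1)^N ⊗ u_N`, so `1 ⊗ u_N ∈ M` as `b ≠ 1`. Peeling off top terms, `M = ℂ[∂] ⊗ X` with
`X = {v | 1 ⊗ v ∈ M}`.
-/

theorem Submodule.mem_of_infinite_setOf_sum_pow_smul_mem {K E : Type*} [Field K]
    [AddCommGroup E] [Module K E] (M : Submodule K E) {n : ℕ} {w : ℕ → E}
    (h : {t : K | ∑ i ∈ Finset.range n, t ^ i • w i ∈ M}.Infinite) {j : ℕ} (hj : j < n) :
    w j ∈ M := by
  rw [← Submodule.Quotient.mk_eq_zero]
  refine (Module.forall_dual_apply_eq_zero_iff K _).1 fun φ => ?_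
  set f := φ ∘ₗ M.mkQ
  set P : K[X] := ∑ i ∈ Finset.range n, C (f (w i)) * X ^ i
  have hP : P = 0 := by
    refine eq_zero_of_infinite_isRoot P (h.mono fun t ht => ?_)
    have hf : f (∑ i ∈ Finset.range n, t ^ i • w i) = 0 := by
      simp only [f, LinearMap.comp_apply, Submodule.mkQ_apply,
        (Submodule.Quotient.mk_eq_zero M).2 ht, map_zero]
    simp only [map_sum, map_smul, smul_eq_mul] at hf
    simpa only [Set.mem_ofPred_eq, P, IsRoot, eval_finsetSum, eval_mul, eval_C, eval_pow, eval_X,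
      mul_comm] using hf
  show f (w j) = 0
  simpa [P, finsetSum_coeff, coeff_C_mul_X_pow, hj] using congrArg (coeff · j) hP

theorem exists_eq_sum_range_X_pow_tmul {R N : Type*} [CommRing R] [AddCommGroup N] [Module R N]
    (w : R[X] ⊗[R] N) :
    ∃ (n : ℕ) (u : ℕ → N), w = ∑ k ∈ Finset.range n, ((X : R[X]) ^ k) ⊗ₜ u k := by
  obtain ⟨c, rfl⟩ := TensorProduct.eq_repr_basis_left (basisMonomials R) w
  obtain ⟨n, hn⟩ := Finset.exists_nat_subset_range c.support
  refine ⟨n, c, ?_⟩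
  rw [Finsupp.sum_of_support_subset c hn _ (by simp)]
  simp [coe_basisMonomials, ← X_pow_eq_monomial]

theorem eventually_lTensor_eq_zero {R M N ι : Type*} [CommRing R] [AddCommGroup M] [Module R M]
    [AddCommGroup N] [Module R N] {F : Filter ι} {d : ι → N →ₗ[R] N}
    (h : ∀ v, ∀ᶠ l in F, d l v = 0) (w : M ⊗[R] N) : ∀ᶠ l in F, (d l).lTensor M w = 0 := by
  induction w using TensorProduct.induction_on with
  | zero => simp
  | tmul m v => filter_upwards [h v] with l hl using by simp [hl]
  | add x y hx hy => filter_upwards [hx, hy] with l hlx hly using by simp [hlx, hly]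

/-- `λ^{-l} d_l ∂^k = (∂ + l(b-1))(∂ - l)^k`, as a polynomial in `l` over `ℂ[∂]`. -/
noncomputable def omegaPoly {R : Type*} [CommRing R] (b : R) (k : ℕ) : R[X][X] :=
  (C X + C (C (b - 1)) * X) * (C X - X) ^ k

section omegaPoly

variable {R : Type*} [CommRing R] (b : R) (k : ℕ)

theorem omegaPoly_eval_C (t : R) :
    (omegaPoly b k).eval (C t) = (X + C (t * (b - 1))) * (X - C t) ^ k := by
  simp [omegaPoly, mul_comm t]

theorem natDegree_omegaPoly_le : (omegaPoly b k).natDegree ≤ k + 1 := by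
  unfold omegaPoly
  compute_degree
  omega

theorem omegaPoly_coeff_zero : (omegaPoly b k).coeff 0 = X ^ (k + 1) := by
  simp [omegaPoly, coeff_zero_eq_eval_zero, pow_succ, mul_comm]

theorem omegaPoly_coeff_succ_self : (omegaPoly b k).coeff (k + 1) = C ((b - 1) * (-1) ^ k) := by
  have hpow := coeff_pow_of_natDegree_le (p := (C X - X : R[X][X])) (m := k) (n := 1)
    (by compute_degree!)
  rw [mul_one] at hpow
  rw [omegaPoly, add_comm k, coeff_mul_add_eq_of_natDegree_le (by compute_degree)
    (by compute_degree), hpow]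
  simp

theorem omegaPoly_eval_C_eq_sum {k n : ℕ} (hk : k < n) (t : R) :
    (omegaPoly b k).eval (C t) = ∑ i ∈ Finset.range (n + 1), t ^ i • (omegaPoly b k).coeff i := by
  rw [eval_eq_sum_range' (n := n + 1) ((natDegree_omegaPoly_le b k).trans_lt (by omega))]
  refine Finset.sum_congr rfl fun i _ => ?_
  rw [smul_eq_C_mul, C_pow, mul_comm]

end omegaPoly

theorem omegaD_X_pow (lam b : ℂ) (l : ℤ) (k : ℕ) :
    omegaD lam b l (X ^ k) = lam ^ l • (omegaPoly b k).eval (C (l : ℂ)) := by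
  rw [omegaPoly_eval_C]
  simp [omegaD]

section TensorSubmodule

variable {V : Type*} [AddCommGroup V] [Module ℂ V] {lam b : ℂ} {d : ℤ → Module.End ℂ V}
  {M : Submodule ℂ (ℂ[X] ⊗[ℂ] V)}

theorem sum_coeff_omegaPoly_tmul_mem (hlam : lam ≠ 0)
    (hnil : ∀ v, ∀ᶠ l in Filter.atTop, d l v = 0)
    (hM : ∀ i, ∀ w ∈ M, tensorD (omegaD lam b) d i w ∈ M) {n : ℕ} {u : ℕ → V}
    (hw : ∑ k ∈ Finset.range n, ((X : ℂ[X]) ^ k) ⊗ₜ u k ∈ M) {j : ℕ} (hj : j ≤ n) :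
    ∑ k ∈ Finset.range n, (omegaPoly b k).coeff j ⊗ₜ u k ∈ M := by
  refine M.mem_of_infinite_setOf_sum_pow_smul_mem
    (w := fun i => ∑ k ∈ Finset.range n, (omegaPoly b k).coeff i ⊗ₜ u k) ?_ (Nat.lt_succ_of_le hj)
  obtain ⟨K, hK⟩ := Filter.eventually_atTop.1 (eventually_lTensor_eq_zero hnil
    (∑ k ∈ Finset.range n, ((X : ℂ[X]) ^ k) ⊗ₜ u k))
  refine ((Set.Ici_infinite K).image Int.cast_injective.injOn).mono ?_
  rintro _ ⟨l, hl, rfl⟩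
  have hmem := M.smul_mem (lam ^ l)⁻¹ (hM l _ hw)
  rw [tensorD, LinearMap.add_apply, hK l hl, add_zero] at hmem
  show _ ∈ M
  convert hmem using 1
  simp only [map_sum, LinearMap.rTensor_tmul, omegaD_X_pow, Finset.smul_sum, ← smul_tmul',
    inv_smul_smul₀ (zpow_ne_zero l hlam)]
  rw [Finset.sum_comm]
  refine Finset.sum_congr rfl fun k hk => ?_
  rw [omegaPoly_eval_C_eq_sum b (Finset.mem_range.1 hk), sum_tmul]
  simp only [smul_tmul']

theorem X_smul_mem (hlam : lam ≠ 0) (hnil : ∀ v, ∀ᶠ l in Filter.atTop, d l v = 0)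
    (hM : ∀ i, ∀ w ∈ M, tensorD (omegaD lam b) d i w ∈ M) {w : ℂ[X] ⊗[ℂ] V} (hw : w ∈ M) :
    (X : ℂ[X]) • w ∈ M := by
  obtain ⟨n, u, rfl⟩ := exists_eq_sum_range_X_pow_tmul w
  have h0 := sum_coeff_omegaPoly_tmul_mem hlam hnil hM hw (Nat.zero_le n)
  simpa only [omegaPoly_coeff_zero, Finset.smul_sum, smul_tmul', smul_eq_mul, ← pow_succ']
    using h0

theorem polynomial_smul_mem (hlam : lam ≠ 0) (hnil : ∀ v, ∀ᶠ l in Filter.atTop, d l v = 0)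
    (hM : ∀ i, ∀ w ∈ M, tensorD (omegaD lam b) d i w ∈ M) (f : ℂ[X]) {w : ℂ[X] ⊗[ℂ] V}
    (hw : w ∈ M) : f • w ∈ M := by
  induction f using Polynomial.induction_on with
  | C a => simpa only [← algebraMap_eq, algebraMap_smul] using M.smul_mem a hw
  | add p q hp hq => simpa only [add_smul] using M.add_mem hp hq
  | monomial k a ih =>
    rw [pow_succ', mul_left_comm, mul_smul]
    exact X_smul_mem hlam hnil hM ih

theorem tmul_mem_of_one_tmul_mem (hlam : lam ≠ 0) (hnil : ∀ v, ∀ᶠ l in Filter.atTop, d l v = 0)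
    (hM : ∀ i, ∀ w ∈ M, tensorD (omegaD lam b) d i w ∈ M) (f : ℂ[X]) {v : V}
    (hv : (1 : ℂ[X]) ⊗ₜ v ∈ M) : f ⊗ₜ v ∈ M := by
  simpa [smul_tmul'] using polynomial_smul_mem hlam hnil hM f hv

theorem one_tmul_mem_of_sum_mem (hlam : lam ≠ 0) (hb : b ≠ 1)
    (hnil : ∀ v, ∀ᶠ l in Filter.atTop, d l v = 0)
    (hM : ∀ i, ∀ w ∈ M, tensorD (omegaD lam b) d i w ∈ M) {N : ℕ} {u : ℕ → V}
    (hw : ∑ k ∈ Finset.range (N + 1), ((X : ℂ[X]) ^ k) ⊗ₜ u k ∈ M) :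
    (1 : ℂ[X]) ⊗ₜ u N ∈ M := by
  have htop := sum_coeff_omegaPoly_tmul_mem hlam hnil hM hw le_rfl
  have hlow : ∀ k ∈ Finset.range N, (omegaPoly b k).coeff (N + 1) ⊗ₜ[ℂ] u k = 0 := fun k hk => by
    rw [coeff_eq_zero_of_natDegree_lt ((natDegree_omegaPoly_le b k).trans_lt
      (by simpa using Finset.mem_range.1 hk)), zero_tmul]
  rw [Finset.sum_range_succ, Finset.sum_eq_zero hlow, zero_add, omegaPoly_coeff_succ_self,
    ← mul_one (C _), ← smul_eq_C_mul, ← smul_tmul'] at htop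
  exact (M.smul_mem_iff (mul_ne_zero (sub_ne_zero.2 hb) (pow_ne_zero N (by norm_num)))).1 htop

theorem one_tmul_mem_of_sum_mem_of_lt (hlam : lam ≠ 0) (hb : b ≠ 1)
    (hnil : ∀ v, ∀ᶠ l in Filter.atTop, d l v = 0)
    (hM : ∀ i, ∀ w ∈ M, tensorD (omegaD lam b) d i w ∈ M) {n : ℕ} {u : ℕ → V}
    (hw : ∑ k ∈ Finset.range n, ((X : ℂ[X]) ^ k) ⊗ₜ u k ∈ M) {k : ℕ} (hk : k < n) :
    (1 : ℂ[X]) ⊗ₜ u k ∈ M := by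
  induction n with
  | zero => cases hk
  | succ n ih =>
    have htop := one_tmul_mem_of_sum_mem hlam hb hnil hM hw
    rcases Nat.lt_succ_iff_lt_or_eq.1 hk with hk | rfl
    · rw [Finset.sum_range_succ] at hw
      exact ih (by simpa using M.sub_mem hw (tmul_mem_of_one_tmul_mem hlam hnil hM (X ^ n) htop)) hk
    · exact htop

end TensorSubmodule

theorem submodules_of_tensor_general {V : Type*} [AddCommGroup V] [Module ℂ V]
    (lam b : ℂ) (hlam : lam ≠ 0) (hb : b ≠ 1)
    (d : ℤ → Module.End ℂ V) (cV : Module.End ℂ V)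
    (hnil : ∀ v : V, ∃ K : ℤ, ∀ l : ℤ, K ≤ l → d l v = 0)
    (M : Submodule ℂ (Polynomial ℂ ⊗[ℂ] V))
    (hM : VirInvariant (tensorD (omegaD lam b) d) (tensorC 0 cV) M) :
    ∃ X : Submodule ℂ V, VirInvariant d cV X ∧
      M = LinearMap.range (LinearMap.lTensor (Polynomial ℂ) X.subtype) := by
  have hnil' : ∀ v, ∀ᶠ l in Filter.atTop, d l v = 0 := fun v => Filter.eventually_atTop.2 (hnil v)
  have htmul := tmul_mem_of_one_tmul_mem hlam hnil' hM.1
  refine ⟨M.comap (TensorProduct.mk ℂ ℂ[X] V 1), ⟨fun i v hv => ?_, fun v hv => ?_⟩,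
    le_antisymm (fun w hw => ?_) ?_⟩
  · simpa [tensorD] using M.sub_mem (hM.1 i _ hv) (htmul (omegaD lam b i 1) hv)
  · simpa [tensorC] using hM.2 _ hv
  · obtain ⟨n, u, rfl⟩ := exists_eq_sum_range_X_pow_tmul w
    exact Submodule.sum_mem _ fun k hk =>
      ⟨(X ^ k) ⊗ₜ ⟨u k, one_tmul_mem_of_sum_mem_of_lt hlam hb hnil' hM.1 hw
        (Finset.mem_range.1 hk)⟩, LinearMap.lTensor_tmul _ _ _ _⟩
  · rintro _ ⟨t, rfl⟩
    induction t using TensorProduct.induction_on with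
    | zero => simp
    | tmul f x => exact htmul f x.2
    | add x y hx hy => simpa using M.add_mem hx hy

/-- for `b ≠ 1` and `V` a highest weight module or a Whittaker module
`L_{ψ_n,θ}` (the key property being that every vector of `V` is killed by `d_l` for `l`
large), every submodule of `Ω(λ,b) ⊗ V` has the form `Ω(λ,b) ⊗ X` for a submodule `X ⊆ V`. -/
theorem submodules_of_tensor {V : Type*} [AddCommGroup V] [Module ℂ V]
    (lam b : ℂ) (hlam : lam ≠ 0) (hb : b ≠ 1)
    (d : ℤ → Module.End ℂ V) (cV : Module.End ℂ V) (hrep : VirRep d cV)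
    (hnil : ∀ v : V, ∃ K : ℤ, ∀ l : ℤ, K ≤ l → d l v = 0)
    (M : Submodule ℂ (Polynomial ℂ ⊗[ℂ] V))
    (hM : VirInvariant (tensorD (omegaD lam b) d) (tensorC 0 cV) M) :
    ∃ X : Submodule ℂ V, VirInvariant d cV X ∧
      M = LinearMap.range (LinearMap.lTensor (Polynomial ℂ) X.subtype) :=
  submodules_of_tensor_general lam b hlam hb d cV hnil M hM
end
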